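/- arXiv:1809.04244 — 3 statements merged into one kernel-verified Lean document; each statement's English description precedes it below -/
import Mathlib

section
/- Let p ∈ {2, 3} and let K be a finite extension of ℚ_p with ring of integers O, uniformizer π, normalized additive valuation ord, and absolute ramification index e := ord(p). Define m := 2e + 1 if p = 2, and m := ⌈3e/2⌉ + 1 if p = 3. Suppose c, d ∈ K* satisfy: (i) ord(c) ≡ ord(d) (mod 6), and (ii) the units c·π^{−ord(c)} and d·π^{−ord(d)} have the same image in the quotient group (O/π^m O)* / ((O/π^m O)*)^6. Then c/d is a sixth power in K*, i.e., there exists t ∈ K* with c = d·t⁶. -/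
set_option maxHeartbeats 2000000
set_option synthInstance.maxHeartbeats 200000

section Aux

variable {K : Type*} [Field K] (ord : K → ℤ)

private lemma ord_one (hord_mul : ∀ x y : K, x ≠ 0 → y ≠ 0 → ord (x * y) = ord x + ord y) :
    ord (1 : K) = 0 := by
  have := hord_mul 1 1 one_ne_zero one_ne_zero
  simpa using this.symm

private lemma ord_neg (hord_mul : ∀ x y : K, x ≠ 0 → y ≠ 0 → ord (x * y) = ord x + ord y)
    (x : K) (hx : x ≠ 0) : ord (-x) = ord x := by
  have h1 : ord (1 : K) = 0 := ord_one ord hord_mul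
  have hm1 : ord (-1 : K) = 0 := by
    have := hord_mul (-1) (-1) (by norm_num) (by norm_num)
    simp only [neg_mul, one_mul, neg_neg, h1] at this
    omega
  have := hord_mul (-1) x (by norm_num) hx
  simpa [hm1] using this

private lemma ord_pow (hord_mul : ∀ x y : K, x ≠ 0 → y ≠ 0 → ord (x * y) = ord x + ord y)
    (x : K) (hx : x ≠ 0) : ∀ n : ℕ, ord (x ^ n) = n * ord x := by
  intro n
  induction n with
  | zero => simpa using ord_one ord hord_mul
  | succ k ih =>
    rw [pow_succ, hord_mul _ _ (pow_ne_zero _ hx) hx, ih]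
    push_cast; ring

private lemma ord_inv (hord_mul : ∀ x y : K, x ≠ 0 → y ≠ 0 → ord (x * y) = ord x + ord y)
    (x : K) (hx : x ≠ 0) : ord x⁻¹ = -ord x := by
  have := hord_mul x x⁻¹ hx (inv_ne_zero hx)
  rw [mul_inv_cancel₀ hx, ord_one ord hord_mul] at this
  omega

private lemma ord_add_dom (hord_mul : ∀ x y : K, x ≠ 0 → y ≠ 0 → ord (x * y) = ord x + ord y)
    (hord_add : ∀ x y : K, x ≠ 0 → y ≠ 0 → x + y ≠ 0 → min (ord x) (ord y) ≤ ord (x + y))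
    (a b : K) (ha : a ≠ 0) (hb : b = 0 ∨ (b ≠ 0 ∧ ord a < ord b)) :
    a + b ≠ 0 ∧ ord (a + b) = ord a := by
  rcases hb with hb | ⟨hbne, hb⟩
  · subst hb; simpa using ha
  have hne : a + b ≠ 0 := by
    intro h
    have : b = -a := by linear_combination h
    rw [this, ord_neg ord hord_mul a ha] at hb
    omega
  refine ⟨hne, ?_⟩
  have h1 := hord_add a b ha hbne hne
  have h2 := hord_add (a + b) (-b) hne (neg_ne_zero.mpr hbne) (by simpa using ha)
  rw [add_neg_cancel_right, ord_neg ord hord_mul b hbne] at h2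
  omega

end Aux

private lemma newton_root (p : ℕ) [Fact p.Prime] {K : Type*} [Field K] [Algebra ℚ_[p] K]
    [FiniteDimensional ℚ_[p] K] (ord : K → ℤ)
    (hord_mul : ∀ x y : K, x ≠ 0 → y ≠ 0 → ord (x * y) = ord x + ord y)
    (hord_add : ∀ x y : K, x ≠ 0 → y ≠ 0 → x + y ≠ 0 → min (ord x) (ord y) ≤ ord (x + y))
    (hord_compat : ∀ q : ℚ_[p], q ≠ 0 →
      ord (algebraMap ℚ_[p] K q) = ord (p : K) * q.valuation)
    (e : ℕ) (he : ord (p : K) = e) (he1 : 1 ≤ e)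
    (n : ℕ) (hn : n = 2 ∨ n = 3)
    (ε s : ℤ) (hε : ord ((n : ℕ) : K) = ε) (hε0 : 0 ≤ ε)
    (hc2 : n = 2 → 2 * ε + 1 ≤ s) (hc3 : n = 3 → 3 * ε + 1 ≤ 2 * s)
    (u : K) (hu0 : u ≠ 0) (hu : u = 1 ∨ s ≤ ord (u - 1)) :
    ∃ a : K, a ≠ 0 ∧ a ^ n = u ∧ (a = 1 ∨ s - ε ≤ ord (a - 1)) := by
  classical
  haveI : CharZero K := charZero_of_injective_algebraMap (algebraMap ℚ_[p] K).injective
  have hsε : 1 ≤ s - ε := by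
    rcases hn with h | h
    · have := hc2 h; omega
    · have := hc3 h; omega
  have hnK : ((n : ℕ) : K) ≠ 0 := Nat.cast_ne_zero.mpr (by omega)
  -- the Newton iteration
  set F : K → K := fun x => x - (x ^ n - u) / ((n : K) * x ^ (n - 1)) with hFdef
  set X : ℕ → K := fun k => F^[k] 1 with hXdef
  have hX0 : X 0 = 1 := rfl
  have hXs : ∀ k, X (k + 1) = F (X k) := fun k => Function.iterate_succ_apply' F k 1
  -- main step
  have main : ∀ k : ℕ,
      (X k ≠ 0 ∧ (X k = 1 ∨ s - ε ≤ ord (X k - 1)) ∧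
        (X k ^ n = u ∨ s + k ≤ ord (X k ^ n - u))) →
      ((X (k+1) ≠ 0 ∧ (X (k+1) = 1 ∨ s - ε ≤ ord (X (k+1) - 1)) ∧
        (X (k+1) ^ n = u ∨ s + (k+1 : ℕ) ≤ ord (X (k+1) ^ n - u))) ∧
       (X (k+1) = X k ∨ (X (k+1) - X k ≠ 0 ∧ s + k - ε ≤ ord (X (k+1) - X k)))) := by
    intro k ih
    obtain ⟨hx0, hx1, hxg⟩ := ih
    set x := X k with hxd
    have hFx : X (k+1) = F x := hXs k
    by_cases hgz : x ^ n = u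
    · have hFeq : F x = x := by
        show x - (x ^ n - u) / ((n : K) * x ^ (n - 1)) = x
        rw [sub_eq_zero_of_eq hgz, zero_div, sub_zero]
      rw [hFx, hFeq]
      exact ⟨⟨hx0, hx1, Or.inl hgz⟩, Or.inl rfl⟩
    · have hordx : ord x = 0 := by
        by_cases hx1' : x = 1
        · rw [hx1']; exact ord_one ord hord_mul
        · have hne : x - 1 ≠ 0 := sub_ne_zero.mpr hx1'
          have h1 : s - ε ≤ ord (x - 1) := hx1.resolve_left hx1'
          have hdom := ord_add_dom ord hord_mul hord_add 1 (x - 1) one_ne_zero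
            (Or.inr ⟨hne, by rw [ord_one ord hord_mul]; omega⟩)
          rw [show (1 : K) + (x - 1) = x by ring] at hdom
          rw [hdom.2]; exact ord_one ord hord_mul
      set g : K := x ^ n - u with hgdef
      have hg0 : g ≠ 0 := sub_ne_zero.mpr hgz
      set t : ℤ := ord g with htdef
      have ht : s + k ≤ t := by
        rcases hxg with h | h
        · exact absurd h hgz
        · exact h
      set D : K := ((n : ℕ) : K) * x ^ (n - 1) with hDdef
      have hD0 : D ≠ 0 := mul_ne_zero hnK (pow_ne_zero _ hx0)
      have hordD : ord D = ε := by
        rw [hDdef, hord_mul _ _ hnK (pow_ne_zero _ hx0), hε,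
          ord_pow ord hord_mul _ hx0, hordx]
        ring
      set h : K := -(g / D) with hhdef
      have hh0 : h ≠ 0 := neg_ne_zero.mpr (div_ne_zero hg0 hD0)
      have hordh : ord h = t - ε := by
        rw [hhdef, ord_neg ord hord_mul _ (div_ne_zero hg0 hD0), div_eq_mul_inv,
          hord_mul _ _ hg0 (inv_ne_zero hD0), ord_inv ord hord_mul _ hD0, hordD, htdef]
        ring
      have hFxx : F x = x + h := by
        show x - g / D = x + h
        rw [hhdef]; ring
      have hthird : X (k+1) ^ n = u ∨ s + (k+1 : ℕ) ≤ ord (X (k+1) ^ n - u) := by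
        rw [hFx, hFxx]
        rcases hn with hn2 | hn3
        · subst hn2
          have h2 : (2 : K) ≠ 0 := two_ne_zero
          have hDq : D = 2 * x := by rw [hDdef]; push_cast; ring
          have hid : (x + h) ^ 2 - u = h ^ 2 := by
            rw [hhdef, hgdef, hDq]
            field_simp
            ring
          right
          rw [hid, ord_pow ord hord_mul _ hh0, hordh]
          have := hc2 rfl
          push_cast
          omega
        · subst hn3
          have hDq : D = 3 * x ^ 2 := by rw [hDdef]; push_cast; ring
          have h3 : (3 : K) ≠ 0 := three_ne_zero
          have hid : (x + h) ^ 3 - u = 3 * x * h ^ 2 + h ^ 3 := by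
            rw [hhdef, hgdef, hDq]
            field_simp
            ring
          by_cases hz : (x + h) ^ 3 - u = 0
          · left; rwa [sub_eq_zero] at hz
          · right
            rw [hid] at hz ⊢
            have hA : (3 : K) * x * h ^ 2 ≠ 0 :=
              mul_ne_zero (mul_ne_zero h3 hx0) (pow_ne_zero _ hh0)
            have hB : h ^ 3 ≠ 0 := pow_ne_zero _ hh0
            have h3K : ((3 : ℕ) : K) = (3 : K) := by push_cast; ring
            have hordA : ord ((3 : K) * x * h ^ 2) = ε + 2 * (t - ε) := by
              rw [hord_mul _ _ (mul_ne_zero h3 hx0) (pow_ne_zero _ hh0),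
                hord_mul _ _ h3 hx0, ← h3K, hε, hordx,
                ord_pow ord hord_mul _ hh0, hordh]
              push_cast; ring
            have hordB : ord (h ^ 3) = 3 * (t - ε) := by
              rw [ord_pow ord hord_mul _ hh0, hordh]; push_cast; ring
            have hmin := hord_add _ _ hA hB hz
            rw [hordA, hordB] at hmin
            have hcc := hc3 rfl
            push_cast
            omega
      have hordFh : s - ε ≤ ord h := by omega
      have hsecond : X (k+1) = 1 ∨ s - ε ≤ ord (X (k+1) - 1) := by
        rw [hFx, hFxx]
        by_cases hF1 : x + h = 1
        · exact Or.inl hF1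
        · right
          have hsub : x + h - 1 = (x - 1) + h := by ring
          rw [hsub]
          by_cases hx1' : x = 1
          · rw [hx1']; simpa using hordFh
          · have hne1 : x - 1 ≠ 0 := sub_ne_zero.mpr hx1'
            have hne2 : (x - 1) + h ≠ 0 := by rw [← hsub]; exact sub_ne_zero.mpr hF1
            have h1 : s - ε ≤ ord (x - 1) := hx1.resolve_left hx1'
            have := hord_add _ _ hne1 hh0 hne2
            omega
      have hfirst : X (k+1) ≠ 0 := by
        by_cases hF1 : X (k+1) = 1
        · rw [hF1]; exact one_ne_zero
        · have h1 : s - ε ≤ ord (X (k+1) - 1) := hsecond.resolve_left hF1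
          have hne : X (k+1) - 1 ≠ 0 := sub_ne_zero.mpr hF1
          have hdom := ord_add_dom ord hord_mul hord_add 1 (X (k+1) - 1) one_ne_zero
            (Or.inr ⟨hne, by rw [ord_one ord hord_mul]; omega⟩)
          rw [show (1 : K) + (X (k+1) - 1) = X (k+1) by ring] at hdom
          exact hdom.1
      have hstep : X (k+1) - X k ≠ 0 ∧ s + k - ε ≤ ord (X (k+1) - X k) := by
        rw [hFx, hFxx, ← hxd, show x + h - x = h by ring]
        exact ⟨hh0, by omega⟩
      exact ⟨⟨hfirst, hsecond, hthird⟩, Or.inr hstep⟩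
  have inv : ∀ k : ℕ, X k ≠ 0 ∧ (X k = 1 ∨ s - ε ≤ ord (X k - 1)) ∧
      (X k ^ n = u ∨ s + k ≤ ord (X k ^ n - u)) := by
    intro k
    induction k with
    | zero =>
      refine ⟨by rw [hX0]; exact one_ne_zero, Or.inl hX0, ?_⟩
      rw [hX0]
      by_cases hu1 : u = 1
      · left; rw [hu1, one_pow]
      · right
        have hs : s ≤ ord (u - 1) := hu.resolve_left hu1
        rw [show (1 : K) ^ n - u = -(u - 1) by ring,
          ord_neg ord hord_mul _ (sub_ne_zero.mpr hu1)]
        push_cast; omega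
    | succ k ihk => exact (main k ihk).1
  have stepb : ∀ k : ℕ, X (k+1) = X k ∨
      (X (k+1) - X k ≠ 0 ∧ s + k - ε ≤ ord (X (k+1) - X k)) :=
    fun k => (main k (inv k)).2
  -- the norm
  have hp1 : (1 : ℝ) < p := by exact_mod_cast (Fact.out : p.Prime).one_lt
  have hp0 : (0 : ℝ) < p := lt_trans one_pos hp1
  have heR : (0 : ℝ) < (e : ℝ) := by exact_mod_cast he1
  set ν : K → ℝ := fun x => if x = 0 then 0 else (p : ℝ) ^ (-(ord x : ℝ) / (e : ℝ)) with hνdef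
  have hν0 : ν 0 = 0 := if_pos rfl
  have hνeq : ∀ x : K, x ≠ 0 → ν x = (p : ℝ) ^ (-(ord x : ℝ) / (e : ℝ)) := fun x hx => if_neg hx
  have hνpos : ∀ x : K, x ≠ 0 → 0 < ν x := fun x hx => by
    rw [hνeq x hx]; exact Real.rpow_pos_of_pos hp0 _
  have hνnonneg : ∀ x : K, 0 ≤ ν x := fun x => by
    by_cases hx : x = 0
    · rw [hx, hν0]
    · exact (hνpos x hx).le
  have hmono : ∀ a b : ℤ, a ≤ b →
      (p : ℝ) ^ (-(b : ℝ) / (e : ℝ)) ≤ (p : ℝ) ^ (-(a : ℝ) / (e : ℝ)) := by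
    intro a b hab
    apply (Real.rpow_le_rpow_left_iff hp1).mpr
    rw [div_le_div_iff_of_pos_right heR]
    exact neg_le_neg (by exact_mod_cast hab)
  have hνle : ∀ (x : K) (M : ℤ), x ≠ 0 → M ≤ ord x →
      ν x ≤ (p : ℝ) ^ (-(M : ℝ) / (e : ℝ)) := fun x M hx hle => by
    rw [hνeq x hx]; exact hmono M (ord x) hle
  have hνge : ∀ (x : K) (M : ℤ), x ≠ 0 → ν x ≤ (p : ℝ) ^ (-(M : ℝ) / (e : ℝ)) →
      M ≤ ord x := by
    intro x M hx hle
    rw [hνeq x hx] at hle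
    have h1 := (Real.rpow_le_rpow_left_iff hp1).mp hle
    rw [div_le_div_iff_of_pos_right heR] at h1
    have := neg_le_neg h1
    simp only [neg_neg] at this
    exact_mod_cast this
  have hνmul : ∀ x y : K, ν (x * y) = ν x * ν y := by
    intro x y
    by_cases hx : x = 0
    · simp [hx, hν0]
    by_cases hy : y = 0
    · simp [hy, hν0]
    rw [hνeq _ (mul_ne_zero hx hy), hνeq x hx, hνeq y hy, ← Real.rpow_add hp0,
      hord_mul x y hx hy]
    congr 1
    push_cast
    ring
  have hνneg : ∀ x : K, ν (-x) = ν x := by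
    intro x
    by_cases hx : x = 0
    · simp [hx]
    rw [hνeq _ (neg_ne_zero.mpr hx), hνeq x hx, ord_neg ord hord_mul x hx]
  have hνmax : ∀ x y : K, ν (x + y) ≤ max (ν x) (ν y) := by
    intro x y
    by_cases hx : x = 0
    · simp [hx, le_max_right]
    by_cases hy : y = 0
    · simp [hy, le_max_left]
    by_cases hxy : x + y = 0
    · rw [hxy, hν0]; exact le_max_of_le_left (hνnonneg x)
    have hmin := hord_add x y hx hy hxy
    rcases le_total (ord x) (ord y) with hle | hle
    · refine le_max_of_le_left ?_
      rw [hνeq x hx]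
      exact hνle _ _ hxy (by omega)
    · refine le_max_of_le_right ?_
      rw [hνeq y hy]
      exact hνle _ _ hxy (by omega)
  have hνadd : ∀ x y : K, ν (x + y) ≤ ν x + ν y := fun x y =>
    (hνmax x y).trans (max_le (le_add_of_nonneg_right (hνnonneg y))
      (le_add_of_nonneg_left (hνnonneg x)))
  have hνsmul : ∀ (q : ℚ_[p]) (x : K), ν (q • x) = ‖q‖ * ν x := by
    intro q x
    by_cases hq : q = 0
    · simp [hq, hν0]
    by_cases hx : x = 0
    · simp [hx, hν0]
    have ham : algebraMap ℚ_[p] K q ≠ 0 := fun h =>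
      hq ((map_eq_zero_iff _ (algebraMap ℚ_[p] K).injective).mp h)
    rw [Algebra.smul_def, hνmul, hνeq _ ham, hord_compat q hq, he,
      Padic.norm_eq_zpow_neg_valuation hq, ← Real.rpow_intCast (p : ℝ) (-q.valuation)]
    congr 2
    push_cast
    field_simp
  -- instances
  letI : MetricSpace K :=
    { dist := fun x y => ν (x - y)
      dist_self := by simp [hν0]
      dist_comm := fun x y => by
        show ν (x - y) = ν (y - x)
        rw [← hνneg (x - y)]; ring_nf
      dist_triangle := fun x y z => by
        show ν (x - z) ≤ ν (x - y) + ν (y - z)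
        have := hνadd (x - y) (y - z)
        simpa using this
      eq_of_dist_eq_zero := fun {x y} (hd : ν (x - y) = 0) => by
        by_contra hne
        exact absurd hd (ne_of_gt (hνpos _ (sub_ne_zero.mpr hne))) }
  letI : NormedField K :=
    { norm := ν
      dist_eq := fun x y => by
        show ν (x - y) = ν (-x + y)
        rw [← hνneg (x - y), neg_sub, sub_eq_neg_add]
      norm_mul := hνmul }
  letI : NormedSpace ℚ_[p] K :=
    { norm_smul_le := fun q x => le_of_eq (hνsmul q x) }
  letI : CompleteSpace K := FiniteDimensional.complete ℚ_[p] K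
  -- geometric bounds
  set r : ℝ := (p : ℝ) ^ (-(1 : ℝ) / (e : ℝ)) with hrdef
  have hr0 : 0 ≤ r := (Real.rpow_pos_of_pos hp0 _).le
  have hr1 : r < 1 := by
    rw [hrdef]
    apply Real.rpow_lt_one_of_one_lt_of_neg hp1
    rw [neg_div]
    exact neg_neg_of_pos (by positivity)
  have hgeom : ∀ (M : ℤ) (k : ℕ),
      (p : ℝ) ^ (-((M + k : ℤ) : ℝ) / (e : ℝ)) = (p : ℝ) ^ (-(M : ℝ) / (e : ℝ)) * r ^ k := by
    intro M k
    rw [hrdef, ← Real.rpow_natCast ((p : ℝ) ^ (-(1 : ℝ) / (e : ℝ))) k,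
      ← Real.rpow_mul hp0.le, ← Real.rpow_add hp0]
    congr 1
    push_cast
    ring
  -- Cauchy sequence
  have hcauchy : CauchySeq X := by
    apply cauchySeq_of_le_geometric r ((p : ℝ) ^ (-((s - ε : ℤ) : ℝ) / (e : ℝ))) hr1
    intro k
    show ν (X k - X (k + 1)) ≤ _
    rw [← hgeom (s - ε) k]
    rcases stepb k with hk | ⟨hk0, hk⟩
    · rw [hk, sub_self, hν0]
      positivity
    · rw [show X k - X (k+1) = -(X (k+1) - X k) by ring, hνneg]
      exact hνle _ _ hk0 (by push_cast; omega)
  obtain ⟨a, ha⟩ := cauchySeq_tendsto_of_complete hcauchy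
  have htend1 : Filter.Tendsto (fun k => X k ^ n - u) Filter.atTop (nhds (a ^ n - u)) :=
    (ha.pow n).sub tendsto_const_nhds
  have htend0 : Filter.Tendsto (fun k => X k ^ n - u) Filter.atTop (nhds 0) := by
    apply squeeze_zero_norm (a := fun k => (p : ℝ) ^ (-((s : ℤ) : ℝ) / (e : ℝ)) * r ^ k)
    · intro k
      show ν (X k ^ n - u) ≤ _
      rw [← hgeom s k]
      by_cases hz : X k ^ n - u = 0
      · rw [hz, hν0]; positivity
      · have hk : s + k ≤ ord (X k ^ n - u) := by
          rcases (inv k).2.2 with h | h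
          · exact absurd (sub_eq_zero_of_eq h) hz
          · exact h
        exact hνle _ _ hz (by push_cast; omega)
    · have := (tendsto_pow_atTop_nhds_zero_of_lt_one hr0 hr1).const_mul
        ((p : ℝ) ^ (-((s : ℤ) : ℝ) / (e : ℝ)))
      simpa using this
  have hroot : a ^ n = u := by
    have := tendsto_nhds_unique htend1 htend0
    exact sub_eq_zero.mp this
  have ha0 : a ≠ 0 := by
    intro h
    rw [h, zero_pow (by omega)] at hroot
    exact hu0 hroot.symm
  refine ⟨a, ha0, hroot, ?_⟩
  by_cases ha1 : a = 1
  · exact Or.inl ha1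
  right
  have hb : ∀ k, ‖X k - 1‖ ≤ (p : ℝ) ^ (-((s - ε : ℤ) : ℝ) / (e : ℝ)) := by
    intro k
    show ν (X k - 1) ≤ _
    by_cases hz : X k - 1 = 0
    · rw [hz, hν0]; positivity
    · have hk : s - ε ≤ ord (X k - 1) := by
        rcases (inv k).2.1 with h | h
        · exact absurd (by rw [h, sub_self]) hz
        · exact h
      exact hνle _ _ hz (by push_cast; omega)
  have htn : Filter.Tendsto (fun k => ‖X k - 1‖) Filter.atTop (nhds ‖a - 1‖) :=
    (ha.sub tendsto_const_nhds).norm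
  have hle := le_of_tendsto htn (Filter.Eventually.of_forall hb)
  have : ν (a - 1) ≤ (p : ℝ) ^ (-((s - ε : ℤ) : ℝ) / (e : ℝ)) := hle
  exact hνge _ _ (sub_ne_zero.mpr ha1) this

section Ram

private lemma one_le_ram (p : ℕ) [Fact p.Prime] {K : Type*} [Field K] [Algebra ℚ_[p] K]
    [FiniteDimensional ℚ_[p] K] (ord : K → ℤ)
    (hord_mul : ∀ x y : K, x ≠ 0 → y ≠ 0 → ord (x * y) = ord x + ord y)
    (hord_add : ∀ x y : K, x ≠ 0 → y ≠ 0 → x + y ≠ 0 → min (ord x) (ord y) ≤ ord (x + y))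
    (hord_compat : ∀ q : ℚ_[p], q ≠ 0 →
      ord (algebraMap ℚ_[p] K q) = ord (p : K) * q.valuation)
    (O : Subring K) (hO : ∀ x : K, x ∈ O ↔ x = 0 ∨ 0 ≤ ord x)
    (π : K) (hπ : ord π = 1) (hπ0 : π ≠ 0)
    (e : ℕ) (he : ord (p : K) = e) : 1 ≤ e := by
  by_contra hcon
  have he0 : ord (p : K) = 0 := by rw [he]; omega
  have hord0 : ∀ q : ℚ_[p], q ≠ 0 → ord (algebraMap ℚ_[p] K q) = 0 := fun q hq => by
    rw [hord_compat q hq, he0, zero_mul]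
  -- minimal polynomial of π
  have hint : IsIntegral ℚ_[p] π := IsIntegral.of_finite ℚ_[p] π
  set f := minpoly ℚ_[p] π with hf
  have haev : Polynomial.aeval π f = 0 := minpoly.aeval _ _
  have hc0 : f.coeff 0 ≠ 0 := minpoly.coeff_zero_ne_zero hint hπ0
  rw [Polynomial.aeval_eq_sum_range] at haev
  rw [Finset.sum_range_succ'] at haev
  set Z : K := ∑ i ∈ Finset.range f.natDegree,
      algebraMap ℚ_[p] K (f.coeff (i + 1)) * π ^ i with hZ
  have hZO : Z ∈ O := by
    apply Subring.sum_mem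
    intro i _
    rw [hO]
    by_cases hci : f.coeff (i + 1) = 0
    · left; simp [hci]
    · right
      rw [hord_mul _ _ ((map_ne_zero_iff _ (algebraMap ℚ_[p] K).injective).mpr hci)
        (pow_ne_zero _ hπ0), hord0 _ hci, ord_pow ord hord_mul _ hπ0, hπ]
      positivity
  have hsum : (∑ i ∈ Finset.range f.natDegree,
      (f.coeff (i + 1)) • π ^ (i + 1)) = π * Z := by
    rw [hZ, Finset.mul_sum]
    apply Finset.sum_congr rfl
    intro i _
    rw [Algebra.smul_def, pow_succ]
    ring
  rw [hsum] at haev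
  have hlast : (f.coeff 0) • π ^ 0 = algebraMap ℚ_[p] K (f.coeff 0) := by
    rw [Algebra.smul_def]; simp
  rw [hlast] at haev
  -- haev : π * Z + algebraMap (f.coeff 0) = 0
  have hZne : Z ≠ 0 := by
    intro h
    rw [h, mul_zero, zero_add] at haev
    exact hc0 (((map_ne_zero_iff _ (algebraMap ℚ_[p] K).injective).mpr hc0) haev).elim
  have hamc : algebraMap ℚ_[p] K (f.coeff 0) = -(π * Z) := by linear_combination haev
  have h1 : ord (algebraMap ℚ_[p] K (f.coeff 0)) = 0 := hord0 _ hc0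
  have h2 : ord (π * Z) = 1 + ord Z := by rw [hord_mul _ _ hπ0 hZne, hπ]
  have h3 : 0 ≤ ord Z := by
    rcases (hO Z).mp hZO with h | h
    · exact (hZne h).elim
    · exact h
  rw [hamc, ord_neg ord hord_mul _ (mul_ne_zero hπ0 hZne), h2] at h1
  omega

end Ram


/-- Let `p ∈ {2, 3}` and let `K` be a finite extension of `ℚ_p`
with ring of integers `O`, uniformizer `π`, normalized additive valuation `ord`
(so `ord π = 1`), and absolute ramification index `e := ord p`.  Define
`m := 2e + 1` if `p = 2` and `m := ⌈3e/2⌉ + 1` if `p = 3`.  Suppose `c, d ∈ K*`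
satisfy `ord c ≡ ord d (mod 6)` and the units `c·π^{−ord c}` and `d·π^{−ord d}`
have the same image in `(O/π^m O)* / ((O/π^m O)*)⁶`.  Then `c/d` is a sixth power
in `K*`: there is `t ∈ K*` with `c = d·t⁶`. -/
theorem sextic_twist_class_criterion (p : ℕ) [Fact p.Prime] (hp : p = 2 ∨ p = 3)
    {K : Type*} [Field K] [Algebra ℚ_[p] K] [FiniteDimensional ℚ_[p] K]
    (ord : K → ℤ)
    (hord_mul : ∀ x y : K, x ≠ 0 → y ≠ 0 → ord (x * y) = ord x + ord y)
    (hord_add : ∀ x y : K, x ≠ 0 → y ≠ 0 → x + y ≠ 0 → min (ord x) (ord y) ≤ ord (x + y))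
    (hord_compat : ∀ q : ℚ_[p], q ≠ 0 →
      ord (algebraMap ℚ_[p] K q) = ord (p : K) * q.valuation)
    (O : Subring K) (hO : ∀ x : K, x ∈ O ↔ x = 0 ∨ 0 ≤ ord x)
    (π : O) (hπ : ord (π : K) = 1)
    (e m : ℕ) (he : ord (p : K) = e)
    (hm : m = if p = 2 then 2 * e + 1 else (⌈(3 * (e : ℚ)) / 2⌉).toNat + 1)
    (c d : K) (hc : c ≠ 0) (hd : d ≠ 0)
    (hval : ord c ≡ ord d [ZMOD 6])
    (uc ud : Oˣ)
    (huc : ((uc : O) : K) = c * (π : K) ^ (-(ord c)))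
    (hud : ((ud : O) : K) = d * (π : K) ^ (-(ord d)))
    (hres : (QuotientGroup.mk (Units.map (Ideal.Quotient.mk
          (Ideal.span {π ^ m})).toMonoidHom uc) :
        (O ⧸ Ideal.span {π ^ m})ˣ ⧸
          (powMonoidHom (α := (O ⧸ Ideal.span {π ^ m})ˣ) 6).range) =
      QuotientGroup.mk (Units.map (Ideal.Quotient.mk
          (Ideal.span {π ^ m})).toMonoidHom ud)) :
    ∃ t : K, t ≠ 0 ∧ c = d * t ^ 6 := by
  classical
  have hm1 : 1 ≤ m := by rw [hm]; split <;> omega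
  -- units of O have ord 0
  have hOmem : ∀ z : O, (z : K) ≠ 0 → 0 ≤ ord (z : K) := fun z hz =>
    ((hO z).mp z.2).resolve_left hz
  have hunit : ∀ v : Oˣ, ((v : O) : K) ≠ 0 ∧ ord ((v : O) : K) = 0 := by
    intro v
    have hmulv : ((v : O) : K) * (((v⁻¹ : Oˣ) : O) : K) = 1 := by
      have h1 : ((v : Oˣ) * v⁻¹ : Oˣ) = 1 := mul_inv_cancel v
      have h2 : (((v : Oˣ) * v⁻¹ : Oˣ) : O) = 1 := by rw [h1]; rfl
      have h3 : ((((v : Oˣ) * v⁻¹ : Oˣ) : O) : K) = 1 := by rw [h2]; rfl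
      rw [← h3]
      push_cast
      ring
    have h1 : ((v : O) : K) ≠ 0 := left_ne_zero_of_mul_eq_one hmulv
    have h2 : (((v⁻¹ : Oˣ) : O) : K) ≠ 0 := right_ne_zero_of_mul_eq_one hmulv
    have h3 := hord_mul _ _ h1 h2
    rw [hmulv, ord_one ord hord_mul] at h3
    have h4 := hOmem _ h1
    have h5 := hOmem _ h2
    exact ⟨h1, by omega⟩
  -- membership in the ideal gives ord bounds
  have hspan : ∀ z : O, z ∈ Ideal.span {π ^ m} →
      ((z : K) = 0 ∨ ((m : ℤ) ≤ ord (z : K) ∧ (π : K) ≠ 0)) := by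
    intro z hz
    obtain ⟨w, hw⟩ := Ideal.mem_span_singleton'.mp hz
    have hwK : (z : K) = (w : K) * ((π : K)) ^ m := by
      rw [← hw]; push_cast; ring
    by_cases hP0 : (π : K) = 0
    · left; rw [hwK, hP0, zero_pow (by omega : m ≠ 0), mul_zero]
    by_cases hw0 : (w : K) = 0
    · left; rw [hwK, hw0, zero_mul]
    right
    refine ⟨?_, hP0⟩
    rw [hwK, hord_mul _ _ hw0 (pow_ne_zero _ hP0), ord_pow ord hord_mul _ hP0, hπ]
    have := hOmem w hw0
    omega
  -- extract the sixth power unit from hres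
  obtain ⟨v, hv⟩ := QuotientGroup.eq.mp hres
  have hv' : (Units.map (Ideal.Quotient.mk (Ideal.span {π ^ m})).toMonoidHom uc) *
      v ^ 6 = Units.map (Ideal.Quotient.mk (Ideal.span {π ^ m})).toMonoidHom ud := by
    have : powMonoidHom (α := (O ⧸ Ideal.span {π ^ m})ˣ) 6 v = v ^ 6 := rfl
    rw [← this, hv, mul_inv_cancel_left]
  -- lift v to O
  obtain ⟨w₀, hw₀⟩ := Ideal.Quotient.mk_surjective ((v : (O ⧸ Ideal.span {π ^ m})ˣ) :
    O ⧸ Ideal.span {π ^ m})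
  obtain ⟨y₀, hy₀⟩ := Ideal.Quotient.mk_surjective (((v⁻¹ : _ˣ) :
    O ⧸ Ideal.span {π ^ m}))
  have hwy : Ideal.Quotient.mk (Ideal.span {π ^ m}) (w₀ * y₀) =
      Ideal.Quotient.mk (Ideal.span {π ^ m}) 1 := by
    rw [map_mul, hw₀, hy₀, map_one]
    exact v.mul_inv
  have hwymem := (Ideal.Quotient.eq).mp hwy
  -- w₀ has ord zero
  have hw₀K : (w₀ : K) ≠ 0 ∧ ord (w₀ : K) = 0 := by
    have hco : ((w₀ * y₀ - 1 : O) : K) = (w₀ : K) * (y₀ : K) - 1 := by push_cast; ring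
    have hdom : (w₀ : K) * (y₀ : K) ≠ 0 ∧ ord ((w₀ : K) * (y₀ : K)) = 0 := by
      rcases hspan _ hwymem with h0 | ⟨hb, -⟩
      · rw [hco] at h0
        have : (w₀ : K) * (y₀ : K) = 1 := by linear_combination h0
        rw [this]
        exact ⟨one_ne_zero, ord_one ord hord_mul⟩
      · rw [hco] at hb
        by_cases hz : (w₀ : K) * (y₀ : K) - 1 = 0
        · have : (w₀ : K) * (y₀ : K) = 1 := by linear_combination hz
          rw [this]
          exact ⟨one_ne_zero, ord_one ord hord_mul⟩
        · have hdd := ord_add_dom ord hord_mul hord_add 1 ((w₀ : K) * (y₀ : K) - 1)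
            one_ne_zero (Or.inr ⟨hz, by rw [ord_one ord hord_mul]; omega⟩)
          rw [show (1 : K) + ((w₀ : K) * (y₀ : K) - 1) = (w₀ : K) * (y₀ : K) by ring] at hdd
          exact ⟨hdd.1, by rw [hdd.2]; exact ord_one ord hord_mul⟩
    have hw0 : (w₀ : K) ≠ 0 := fun h => hdom.1 (by rw [h, zero_mul])
    have hy0 : (y₀ : K) ≠ 0 := fun h => hdom.1 (by rw [h, mul_zero])
    have := hord_mul _ _ hw0 hy0
    have h4 := hOmem _ hw0
    have h5 := hOmem _ hy0
    exact ⟨hw0, by omega⟩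
  obtain ⟨hw0, hordw⟩ := hw₀K
  -- the congruence in O
  have hval' := congrArg (Units.val) hv'
  simp only [Units.val_mul, Units.val_pow_eq_pow_val, Units.coe_map,
    RingHom.toMonoidHom_eq_coe, MonoidHom.coe_coe] at hval'
  rw [← hw₀] at hval'
  have hQ : Ideal.Quotient.mk (Ideal.span {π ^ m}) ((ud : O)) =
      Ideal.Quotient.mk (Ideal.span {π ^ m}) ((uc : O) * w₀ ^ 6) := by
    rw [map_mul, map_pow]
    exact hval'.symm
  have hmem2 := (Ideal.Quotient.eq).mp hQ
  -- pass to K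
  set Uc : K := ((uc : O) : K) with hUc
  set Ud : K := ((ud : O) : K) with hUd
  set W : K := (w₀ : K) with hW
  have hUc0 : Uc ≠ 0 := (hunit uc).1
  have hUd0 : Ud ≠ 0 := (hunit ud).1
  have hordUc : ord Uc = 0 := (hunit uc).2
  have hordUd : ord Ud = 0 := (hunit ud).2
  set U : K := Uc * W ^ 6 with hUdef
  have hU0 : U ≠ 0 := mul_ne_zero hUc0 (pow_ne_zero _ hw0)
  have hordU : ord U = 0 := by
    rw [hUdef, hord_mul _ _ hUc0 (pow_ne_zero _ hw0), hordUc,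
      ord_pow ord hord_mul _ hw0, hordw]
    ring
  have hdiffK : ((((ud : O) - (uc : O) * w₀ ^ 6 : O)) : K) = Ud - U := by
    push_cast
    rw [hUdef, hUc, hUd, hW]
  set η : K := Ud / U with hηdef
  have hη0 : η ≠ 0 := div_ne_zero hUd0 hU0
  have hUdη : Ud = U * η := by rw [hηdef]; field_simp
  have hsix : ∃ τ : K, τ ≠ 0 ∧ τ ^ 6 = η := by
    by_cases hη1 : η = 1
    · exact ⟨1, one_ne_zero, by rw [hη1, one_pow]⟩
    have hUdU : Ud - U ≠ 0 := by
      intro h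
      apply hη1
      rw [hηdef, sub_eq_zero.mp h, div_self hU0]
    rcases hspan _ hmem2 with h0 | ⟨hb, hP0⟩
    · rw [hdiffK] at h0
      exact absurd h0 hUdU
    rw [hdiffK] at hb
    -- ord (η - 1) ≥ m
    have hsub : η - 1 = (Ud - U) / U := by
      rw [hηdef]; field_simp
    have hordη : (m : ℤ) ≤ ord (η - 1) := by
      rw [hsub, div_eq_mul_inv, hord_mul _ _ hUdU (inv_ne_zero hU0),
        ord_inv ord hord_mul _ hU0, hordU]
      omega
    have hherm : η = 1 ∨ (m : ℤ) ≤ ord (η - 1) := Or.inr hordη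
    -- ramification at least 1
    have he1 : 1 ≤ e := one_le_ram p ord hord_mul hord_add hord_compat O hO
      ((π : O) : K) hπ hP0 e he
    rcases hp with hp2 | hp3
    · -- p = 2
      subst hp2
      have hmval : m = 2 * e + 1 := by rw [hm]; simp
      have hord3 : ord ((3 : ℕ) : K) = ((0 : ℤ)) := by
        have h3q : ((3 : ℕ) : ℚ_[2]) ≠ 0 := by exact_mod_cast (by norm_num : (3:ℚ_[2]) ≠ 0)
        have hco := hord_compat _ h3q
        rw [map_natCast] at hco
        rw [hco, Padic.valuation_natCast,
          padicValNat.eq_zero_of_not_dvd (by norm_num), Nat.cast_zero, mul_zero]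
      obtain ⟨a, ha0, ha2, hacl⟩ := newton_root 2 ord hord_mul hord_add hord_compat
        e he he1 2 (Or.inl rfl) (e : ℤ) (m : ℤ) he (by positivity)
        (fun _ => by omega) (fun h => by omega) η hη0 hherm
      obtain ⟨b, hb0, hb3, -⟩ := newton_root 2 ord hord_mul hord_add hord_compat
        e he he1 3 (Or.inr rfl) (0 : ℤ) ((m : ℤ) - e) hord3 le_rfl
        (fun h => by omega) (fun _ => by omega) a ha0 hacl
      refine ⟨b, hb0, ?_⟩
      rw [show (6 : ℕ) = 3 * 2 from rfl, pow_mul, hb3, ha2]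
    · -- p = 3
      subst hp3
      have hmineq : 3 * (e : ℤ) + 2 ≤ 2 * m := by
        have h1 : ((3 * (e : ℚ)) / 2 : ℚ) ≤ (⌈(3 * (e : ℚ)) / 2⌉ : ℚ) := Int.le_ceil _
        have h2 : 3 * (e : ℤ) ≤ 2 * ⌈(3 * (e : ℚ)) / 2⌉ := by
          have := mul_le_mul_of_nonneg_left h1 (by norm_num : (0:ℚ) ≤ 2)
          rw [mul_div_cancel₀ _ (by norm_num : (2:ℚ) ≠ 0)] at this
          exact_mod_cast this
        have h3 : (0 : ℤ) ≤ ⌈(3 * (e : ℚ)) / 2⌉ := by positivity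
        have h4 : (m : ℤ) = ⌈(3 * (e : ℚ)) / 2⌉ + 1 := by
          rw [hm]
          simp only [if_neg (by norm_num : (3:ℕ) ≠ 2)]
          push_cast [Int.toNat_of_nonneg h3]
          ring
        omega
      have hord2 : ord ((2 : ℕ) : K) = ((0 : ℤ)) := by
        have h2q : ((2 : ℕ) : ℚ_[3]) ≠ 0 := by exact_mod_cast (by norm_num : (2:ℚ_[3]) ≠ 0)
        have hco := hord_compat _ h2q
        rw [map_natCast] at hco
        rw [hco, Padic.valuation_natCast,
          padicValNat.eq_zero_of_not_dvd (by norm_num), Nat.cast_zero, mul_zero]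
      obtain ⟨a, ha0, ha2, hacl⟩ := newton_root 3 ord hord_mul hord_add hord_compat
        e he he1 2 (Or.inl rfl) (0 : ℤ) (m : ℤ) hord2 le_rfl
        (fun _ => by omega) (fun h => by omega) η hη0 hherm
      obtain ⟨b, hb0, hb3, -⟩ := newton_root 3 ord hord_mul hord_add hord_compat
        e he he1 3 (Or.inr rfl) (e : ℤ) ((m : ℤ) - 0) he (by positivity)
        (fun h => by omega) (fun _ => by omega) a ha0 (by simpa using hacl)
      refine ⟨b, hb0, ?_⟩
      rw [show (6 : ℕ) = 3 * 2 from rfl, pow_mul, hb3, ha2]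
  obtain ⟨τ, hτ0, hτ6⟩ := hsix
  -- express c and d via the units
  have hka : ∀ (z : K) (vz : Oˣ), z ≠ 0 → ((vz : O) : K) = z * (π : K) ^ (-(ord z)) →
      z = ((vz : O) : K) * (π : K) ^ (ord z) ∧ ((π : K) = 0 → ord z = 0) := by
    intro z vz hz hvz
    by_cases hP0 : (π : K) = 0
    · have hoz : ord z = 0 := by
        by_contra hoz
        rw [hP0, zero_zpow _ (by omega : -(ord z) ≠ 0), mul_zero] at hvz
        exact (hunit vz).1 hvz
      refine ⟨?_, fun _ => hoz⟩
      rw [hvz, hoz]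
      simp
    · refine ⟨?_, fun h => absurd h hP0⟩
      rw [hvz, mul_assoc, ← zpow_add₀ hP0]
      simp
  obtain ⟨hceq, hcπ⟩ := hka c uc hc huc
  obtain ⟨hdeq, hdπ⟩ := hka d ud hd hud
  -- the valuation difference
  obtain ⟨k, hk⟩ := hval.dvd
  -- final assembly
  have hπk : (π : K) ^ k ≠ 0 := by
    by_cases hP0 : (π : K) = 0
    · have : k = 0 := by
        have h1 := hcπ hP0
        have h2 := hdπ hP0
        omega
      rw [this, zpow_zero]
      exact one_ne_zero
    · exact zpow_ne_zero _ hP0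
  set T : K := W * τ * (π : K) ^ k with hT
  have hT0 : T ≠ 0 := mul_ne_zero (mul_ne_zero hw0 hτ0) hπk
  have hsplit : (π : K) ^ (ord d) = (π : K) ^ (ord c) * ((π : K) ^ k) ^ 6 := by
    by_cases hP0 : (π : K) = 0
    · have h1 := hcπ hP0
      have h2 := hdπ hP0
      have h3 : k = 0 := by omega
      rw [h1, h2, h3]
      simp
    · rw [← zpow_natCast ((π : K) ^ k) 6, ← zpow_mul, ← zpow_add₀ hP0]
      congr 1
      omega
  have hdct : d = c * T ^ 6 := by
    rw [hdeq, ← hUd, hUdη, hUdef, hsplit, ← hτ6, hT]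
    conv_rhs => rw [hceq, ← hUc]
    ring
  refine ⟨T⁻¹, inv_ne_zero hT0, ?_⟩
  rw [hdct, inv_pow, mul_assoc, mul_inv_cancel₀ (pow_ne_zero 6 hT0), mul_one]
end

section
/- Let F be a field of characteristic different from 3, d ∈ F, and let x', y' ∈ F satisfy y'² = x'³ − 27d with x' ≠ 0. Set X := (x'³ − 108d)/(9x'²) and Y := y'(x'³ + 216d)/(27x'³). Then Y² = X³ + d; that is, the map φ̂(x', y') = ((x'³ − 108d)/(9x'²), y'(x'³ + 216d)/(27x'³)) sends affine points of the curve E'_d with nonzero x-coordinate to affine points of the curve E_d. -/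
/-!
Writing `u = x'³`, the equation of `E'_d` turns `Y²` into `(u - 27d)(u + 216d)² / (27x'³)²`, and
`(u - 27d)(u + 216d)² = (u - 108d)³ + 729 d u²` is a polynomial identity. Since `27² = 9³`, both
sides of `Y² = X³ + d` then live over the common denominator `(9x'²)³ = 729 u²`.
-/

theorem sub_mul_add_sq_eq_sub_cube_add {R : Type*} [CommRing R] (d u : R) :
    (u - 27 * d) * (u + 216 * d) ^ 2 = (u - 108 * d) ^ 3 + 729 * d * u ^ 2 := by
  ring

/-- Let `F` be a field of characteristic different from 3, `d ∈ F`,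
and let `x', y' ∈ F` satisfy `y'² = x'³ − 27d` with `x' ≠ 0`.
Set `X := (x'³ − 108d)/(9x'²)` and `Y := y'(x'³ + 216d)/(27x'³)`. Then `Y² = X³ + d`;
that is, the map `φ̂(x', y') = ((x'³ − 108d)/(9x'²), y'(x'³ + 216d)/(27x'³))` sends
affine points of `E'_d : y² = x³ − 27d` with nonzero `x`-coordinate to affine points
of `E_d : y² = x³ + d`. -/
theorem sextic_isogeny_backward {F : Type*} [Field F] (h3 : (3 : F) ≠ 0)
    (d x' y' : F) (hx : x' ≠ 0) (h : y' ^ 2 = x' ^ 3 - 27 * d) :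
    (y' * (x' ^ 3 + 216 * d) / (27 * x' ^ 3)) ^ 2 =
      ((x' ^ 3 - 108 * d) / (9 * x' ^ 2)) ^ 3 + d := by
  have h9 : (9 : F) ≠ 0 := by simpa [show (9 : F) = 3 ^ 2 by norm_num] using pow_ne_zero 2 h3
  have hden : (9 * x' ^ 2) ^ 3 ≠ 0 := pow_ne_zero 3 (mul_ne_zero h9 (pow_ne_zero 2 hx))
  rw [div_pow, mul_pow, h, sub_mul_add_sq_eq_sub_cube_add,
    show (27 * x' ^ 3) ^ 2 = (9 * x' ^ 2) ^ 3 by ring, add_div, div_pow]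
  congr 1
  rw [div_eq_iff hden]
  ring
end

section
/- Let F be a field of characteristic different from 2 and 3, let d ∈ F with d ≠ 0, and let P = (x, y) be an affine F-rational point of the elliptic curve E_d : y² = x³ + d with x ≠ 0 and x³ + 4d ≠ 0. Define φ(P) := ((x³ + 4d)/x², y(x³ − 8d)/x³), an affine point of E'_d : y² = x³ − 27d, and φ̂(x', y') := ((x'³ − 108d)/(9x'²), y'(x'³ + 216d)/(27x'³)). Then φ̂(φ(P)) is a well-defined affine point of E_d and equals 3·P, the triple of P under the elliptic curve group law on E_d(F). -/
/-!
Write `t = x³ + 4d`. On the Mordell curve `y² = x³ + d` the tangent at `P` gives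
`X(2P) - x = -3xt / (4y²)`, so for `t ≠ 0` the chord through `2P` and `P` computes `3P`, with
`X(3P) = (x⁹ - 96dx⁶ + 48d²x³ + 64d³) / (3xt)²`, where `3xt` is the 3-division polynomial.
Clearing denominators, `φ̂ ∘ φ` is given by the same rational functions. If `y = 0`, then `P` is
2-torsion, so `3P = P`, and `φ̂(φ(P)) = P` directly.
-/

open WeierstrassCurve.Affine

lemma WeierstrassCurve.Affine.mordell_a₆_eq {F : Type*} [Field F] {d x y : F}
    (h : Equation (⟨0, 0, 0, 0, d⟩ : Affine F) x y) : d = y ^ 2 - x ^ 3 := by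
  rw [equation_iff] at h
  linear_combination -h

namespace WeierstrassCurve.Affine.Point

variable {F : Type*} [Field F] [DecidableEq F]

section ChordTangent

variable {W : WeierstrassCurve.Affine F}

lemma exists_some_add_self_eq_of_Y_ne {x y x₂ y₂ L : F} (h : W.Nonsingular x y)
    (hy : y ≠ W.negY x y)
    (hL : L * (y - W.negY x y) = 3 * x ^ 2 + 2 * W.a₂ * x + W.a₄ - W.a₁ * y)
    (hx₂ : x₂ = W.addX x x L) (hy₂ : y₂ = W.addY x x y L) :
    ∃ h₂ : W.Nonsingular x₂ y₂, some _ _ h + some _ _ h = some _ _ h₂ := by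
  have hslope : W.slope x x y y = L := by
    rw [slope_of_Y_ne rfl hy, div_eq_iff (sub_ne_zero.2 hy), hL]
  subst hx₂ hy₂ hslope
  exact ⟨_, add_self_of_Y_ne hy⟩

lemma exists_some_add_some_eq_of_X_ne {x₁ y₁ x₂ y₂ x₃ y₃ L : F} (h₁ : W.Nonsingular x₁ y₁)
    (h₂ : W.Nonsingular x₂ y₂) (hx : x₁ ≠ x₂) (hL : L * (x₁ - x₂) = y₁ - y₂)
    (hx₃ : x₃ = W.addX x₁ x₂ L) (hy₃ : y₃ = W.addY x₁ x₂ y₁ L) :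
    ∃ h₃ : W.Nonsingular x₃ y₃, some _ _ h₁ + some _ _ h₂ = some _ _ h₃ := by
  have hslope : W.slope x₁ x₂ y₁ y₂ = L := by
    rw [slope_of_X_ne hx, div_eq_iff (sub_ne_zero.2 hx), hL]
  subst hx₃ hy₃ hslope
  exact ⟨_, add_of_X_ne hx⟩

lemma three_nsmul_some_of_Y_eq {x y : F} (h : W.Nonsingular x y) (hy : y = W.negY x y) :
    3 • some _ _ h = some _ _ h := by
  rw [succ_nsmul, two_nsmul, add_self_of_Y_eq hy, zero_add]

end ChordTangent

section Mordell

variable {d x y : F}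

lemma exists_two_nsmul_some_eq_mordell (h2 : (2 : F) ≠ 0) (hy : y ≠ 0)
    (hP : Nonsingular (⟨0, 0, 0, 0, d⟩ : Affine F) x y) :
    ∃ h₂ : Nonsingular (⟨0, 0, 0, 0, d⟩ : Affine F)
      (x * (x ^ 3 - 8 * d) / (4 * y ^ 2)) ((x ^ 6 + 20 * d * x ^ 3 - 8 * d ^ 2) / (8 * y ^ 3)),
      2 • some _ _ hP = some _ _ h₂ := by
  have h4 : (4 : F) ≠ 0 := by
    rw [show (4 : F) = 2 ^ 2 by norm_num]; exact pow_ne_zero 2 h2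
  have h8 : (8 : F) ≠ 0 := by
    rw [show (8 : F) = 2 ^ 3 by norm_num]; exact pow_ne_zero 3 h2
  obtain rfl := mordell_a₆_eq hP.1
  rw [two_nsmul]
  refine exists_some_add_self_eq_of_Y_ne hP (L := 3 * x ^ 2 / (2 * y)) ?_ ?_ ?_ ?_
  · simp only [negY, zero_mul, sub_zero]
    exact fun h => hy (by simpa [h2] using (by linear_combination h : (2 : F) * y = 0))
  · simp only [negY]
    field_simp
    ring
  · simp only [addX]
    field_simp
    ring
  · simp only [addY, negAddY, addX, negY]
    field_simp
    ring

lemma exists_three_nsmul_some_eq_mordell (h2 : (2 : F) ≠ 0) (h3 : (3 : F) ≠ 0) (hx : x ≠ 0)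
    (ht : x ^ 3 + 4 * d ≠ 0) (hP : Nonsingular (⟨0, 0, 0, 0, d⟩ : Affine F) x y) :
    ∃ h₃ : Nonsingular (⟨0, 0, 0, 0, d⟩ : Affine F)
      ((x ^ 9 - 96 * d * x ^ 6 + 48 * d ^ 2 * x ^ 3 + 64 * d ^ 3) /
        (9 * x ^ 2 * (x ^ 3 + 4 * d) ^ 2))
      (y * (x ^ 3 - 8 * d) * (x ^ 9 + 228 * d * x ^ 6 + 48 * d ^ 2 * x ^ 3 + 64 * d ^ 3) /
        (27 * x ^ 3 * (x ^ 3 + 4 * d) ^ 3)),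
      3 • some _ _ hP = some _ _ h₃ := by
  have h4 : (4 : F) ≠ 0 := by
    rw [show (4 : F) = 2 ^ 2 by norm_num]; exact pow_ne_zero 2 h2
  have h8 : (8 : F) ≠ 0 := by
    rw [show (8 : F) = 2 ^ 3 by norm_num]; exact pow_ne_zero 3 h2
  have h6 : (6 : F) ≠ 0 := by
    rw [show (6 : F) = 2 * 3 by norm_num]; exact mul_ne_zero h2 h3
  have h9 : (9 : F) ≠ 0 := by
    rw [show (9 : F) = 3 ^ 2 by norm_num]; exact pow_ne_zero 2 h3
  have h27 : (27 : F) ≠ 0 := by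
    rw [show (27 : F) = 3 ^ 3 by norm_num]; exact pow_ne_zero 3 h3
  have hE := mordell_a₆_eq hP.1
  by_cases hy : y = 0
  · subst hy
    have hX : (x ^ 9 - 96 * d * x ^ 6 + 48 * d ^ 2 * x ^ 3 + 64 * d ^ 3) /
        (9 * x ^ 2 * (x ^ 3 + 4 * d) ^ 2) = x := by
      rw [div_eq_iff (by simp [h9, hx, ht])]
      subst hE
      ring
    rw [hX, zero_mul, zero_mul, zero_div]
    exact ⟨hP, three_nsmul_some_of_Y_eq hP (by simp [negY])⟩
  · obtain ⟨h₂, h2P⟩ := exists_two_nsmul_some_eq_mordell h2 hy hP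
    rw [succ_nsmul, h2P]
    -- `field_simp` only cancels `x³ + 4d` while it is an atom, so `d` is substituted afterwards.
    generalize htd : x ^ 3 + 4 * d = t at ht ⊢
    refine exists_some_add_some_eq_of_X_ne h₂ hP
      (L := (27 * x ^ 6 - 36 * x ^ 3 * y ^ 2 + 16 * y ^ 4) / (6 * x * y * t)) ?_ ?_ ?_ ?_
    · intro h
      rw [div_eq_iff (by simp [h4, hy])] at h
      have h3xt : 3 * x * (x ^ 3 + 4 * d) = 0 := by linear_combination -h + 4 * x * hE
      exact ht (by simpa [← htd, h3, hx] using h3xt)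
    · field_simp
      subst htd hE
      ring
    · simp only [addX]
      field_simp
      subst htd hE
      ring
    · simp only [addY, negAddY, addX, negY]
      field_simp
      subst htd hE
      ring

end Mordell

end WeierstrassCurve.Affine.Point

open Classical in
theorem sextic_dual_isogeny_comp_eq_three_smul_general {F : Type*} [Field F]
    (h2 : (2 : F) ≠ 0) (h3 : (3 : F) ≠ 0) (d : F)
    (x y : F) (hx : x ≠ 0) (hx4 : x ^ 3 + 4 * d ≠ 0)
    (hP : WeierstrassCurve.Affine.Nonsingular
      (⟨0, 0, 0, 0, d⟩ : WeierstrassCurve.Affine F) x y) :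
    ∃ h' : WeierstrassCurve.Affine.Nonsingular
        (⟨0, 0, 0, 0, d⟩ : WeierstrassCurve.Affine F)
        ((((x ^ 3 + 4 * d) / x ^ 2) ^ 3 - 108 * d) / (9 * ((x ^ 3 + 4 * d) / x ^ 2) ^ 2))
        ((y * (x ^ 3 - 8 * d) / x ^ 3) * (((x ^ 3 + 4 * d) / x ^ 2) ^ 3 + 216 * d) /
          (27 * ((x ^ 3 + 4 * d) / x ^ 2) ^ 3)),
      WeierstrassCurve.Affine.Point.some _ _ h' =
        3 • WeierstrassCurve.Affine.Point.some _ _ hP := by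
  have h9 : (9 : F) ≠ 0 := by
    rw [show (9 : F) = 3 ^ 2 by norm_num]; exact pow_ne_zero 2 h3
  have h27 : (27 : F) ≠ 0 := by
    rw [show (27 : F) = 3 ^ 3 by norm_num]; exact pow_ne_zero 3 h3
  have hX : (((x ^ 3 + 4 * d) / x ^ 2) ^ 3 - 108 * d) / (9 * ((x ^ 3 + 4 * d) / x ^ 2) ^ 2) =
      (x ^ 9 - 96 * d * x ^ 6 + 48 * d ^ 2 * x ^ 3 + 64 * d ^ 3) /
        (9 * x ^ 2 * (x ^ 3 + 4 * d) ^ 2) := by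
    field_simp
    ring
  have hY : (y * (x ^ 3 - 8 * d) / x ^ 3) * (((x ^ 3 + 4 * d) / x ^ 2) ^ 3 + 216 * d) /
      (27 * ((x ^ 3 + 4 * d) / x ^ 2) ^ 3) =
      y * (x ^ 3 - 8 * d) * (x ^ 9 + 228 * d * x ^ 6 + 48 * d ^ 2 * x ^ 3 + 64 * d ^ 3) /
        (27 * x ^ 3 * (x ^ 3 + 4 * d) ^ 3) := by
    field_simp
    ring
  obtain ⟨h₃, h3P⟩ := WeierstrassCurve.Affine.Point.exists_three_nsmul_some_eq_mordell
    h2 h3 hx hx4 hP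
  rw [hX, hY]
  exact ⟨h₃, h3P.symm⟩

open Classical in
/-- Let `F` be a field of characteristic different from 2 and 3,
`d ∈ F` nonzero, and let `P = (x, y)` be an affine `F`-rational point of the
elliptic curve `E_d : y² = x³ + d` with `x ≠ 0` and `x³ + 4d ≠ 0`.  With
`φ(P) := ((x³ + 4d)/x², y(x³ − 8d)/x³)` (an affine point of `E'_d : y² = x³ − 27d`)
and `φ̂(x', y') := ((x'³ − 108d)/(9x'²), y'(x'³ + 216d)/(27x'³))`, the point
`φ̂(φ(P))` is a well-defined affine point of `E_d` and equals `3 • P` under the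
group law. -/
theorem sextic_dual_isogeny_comp_eq_three_smul {F : Type*} [Field F]
    (h2 : (2 : F) ≠ 0) (h3 : (3 : F) ≠ 0) (d : F) (hd : d ≠ 0)
    (x y : F) (hx : x ≠ 0) (hx4 : x ^ 3 + 4 * d ≠ 0)
    (hP : WeierstrassCurve.Affine.Nonsingular
      (⟨0, 0, 0, 0, d⟩ : WeierstrassCurve.Affine F) x y) :
    ∃ h' : WeierstrassCurve.Affine.Nonsingular
        (⟨0, 0, 0, 0, d⟩ : WeierstrassCurve.Affine F)
        ((((x ^ 3 + 4 * d) / x ^ 2) ^ 3 - 108 * d) / (9 * ((x ^ 3 + 4 * d) / x ^ 2) ^ 2))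
        ((y * (x ^ 3 - 8 * d) / x ^ 3) * (((x ^ 3 + 4 * d) / x ^ 2) ^ 3 + 216 * d) /
          (27 * ((x ^ 3 + 4 * d) / x ^ 2) ^ 3)),
      WeierstrassCurve.Affine.Point.some _ _ h' =
        3 • WeierstrassCurve.Affine.Point.some _ _ hP :=
  sextic_dual_isogeny_comp_eq_three_smul_general h2 h3 d x y hx hx4 hP
end
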